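/- arXiv:2209.05146 — 2 statements merged into one kernel-verified Lean document; each statement's English description precedes it below -/
import Mathlib

section
/- The Lyapunov iteration lower-bounds the Riccati iteration: let Z_n(0), n = 1,…,N, be positive semidefinite symmetric n_x×n_x matrices and define Z_n(k+1) = Σ_{m=1}^N p_{e,mn} 𝒳_λ(Z_m(k), π^∞_{e,m}, γ̂_{e,m}). Define S_n(0) = 0 and S_n(k+1) = 𝒮_{e,n}(S(k)). Assume π^∞_e is stationary for P_e, i.e. π^∞_{e,n} = Σ_{m=1}^N p_{e,mn} π^∞_{e,m} for all n. Then S_n(k) ⪯ Z_n(k) for every k ∈ ℕ and every n = 1,…,N. -/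
open Matrix Kronecker Filter

/-- The Riccati-type operator 𝒳_λ(X, α, φ). -/
noncomputable def calX {nx ny : ℕ} (A : Matrix (Fin nx) (Fin nx) ℝ)
    (L : Matrix (Fin ny) (Fin nx) ℝ) (Q : Matrix (Fin nx) (Fin nx) ℝ)
    (R : Matrix (Fin ny) (Fin ny) ℝ) (lam : ℝ) (X : Matrix (Fin nx) (Fin nx) ℝ)
    (al phi : ℝ) : Matrix (Fin nx) (Fin nx) ℝ :=
  (1 - lam * phi) • (A * X * Aᵀ + al • Q) +
    (lam * phi) •
      (A * X * Aᵀ + al • Q - A * X * Lᵀ * (L * X * Lᵀ + al • R)⁻¹ * (L * X * Aᵀ))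

/-- Loewner order: `X ⪯ Y` iff `Y - X` is positive semidefinite. -/
def loewnerLE {nx : ℕ} (X Y : Matrix (Fin nx) (Fin nx) ℝ) : Prop :=
  (Y - X).PosSemidef

/-- The trajectory of the coupled Riccati recursion
`Z_n(k+1) = ∑ m, p_{mn} 𝒳_λ(Z_m(k), α_m(k), γ_m)` started at `Y0`. -/
noncomputable def traj {nx ny N : ℕ} (A : Matrix (Fin nx) (Fin nx) ℝ)
    (L : Matrix (Fin ny) (Fin nx) ℝ) (Q : Matrix (Fin nx) (Fin nx) ℝ)
    (R : Matrix (Fin ny) (Fin ny) ℝ) (P : Matrix (Fin N) (Fin N) ℝ)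
    (γ : Fin N → ℝ) (α : Fin N → ℕ → ℝ) (lam : ℝ)
    (Y0 : Fin N → Matrix (Fin nx) (Fin nx) ℝ) : ℕ → Fin N → Matrix (Fin nx) (Fin nx) ℝ
  | 0 => Y0
  | k + 1 => fun n =>
      ∑ m, P m n • calX A L Q R lam (traj A L Q R P γ α lam Y0 k m) (α m k) (γ m)

/-- The coupled Lyapunov operator
`𝒮_{e,n}(V) = ∑ m, p_{e,mn} (1 − λ γ̂_{e,m}) A V_m Aᵀ + π^∞_{e,n} Q`. -/
noncomputable def Sop {nx N : ℕ} (A Q : Matrix (Fin nx) (Fin nx) ℝ)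
    (Pe : Matrix (Fin N) (Fin N) ℝ) (γ : Fin N → ℝ) (lam : ℝ) (π : Fin N → ℝ)
    (V : Fin N → Matrix (Fin nx) (Fin nx) ℝ) (n : Fin N) :
    Matrix (Fin nx) (Fin nx) ℝ :=
  (∑ m, (Pe m n * (1 - lam * γ m)) • (A * V m * Aᵀ)) + π n • Q

/-- The coupled Lyapunov iteration started at the zero tuple. -/
noncomputable def Straj {nx N : ℕ} (A Q : Matrix (Fin nx) (Fin nx) ℝ)
    (Pe : Matrix (Fin N) (Fin N) ℝ) (γ : Fin N → ℝ) (lam : ℝ) (π : Fin N → ℝ) :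
    ℕ → Fin N → Matrix (Fin nx) (Fin nx) ℝ
  | 0 => fun _ => 0
  | k + 1 => fun n => Sop A Q Pe γ lam π (Straj A Q Pe γ lam π k) n

/-- Block diagonal matrix (direct sum) of `N` matrices on the index set `I`. -/
def blkDiag {N : ℕ} {I : Type}
    (f : Fin N → Matrix I I ℝ) : Matrix (Fin N × I) (Fin N × I) ℝ :=
  Matrix.of fun p q => if p.1 = q.1 then f p.1 p.2 q.2 else 0

/-- The matrix `𝒜_e = (P_eᵀ ⊗ I_{n_x²}) · blkdiag_m ((1 − λ γ̂_{e,m}) (A ⊗ A))`. -/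
noncomputable def calAe {nx N : ℕ} (A : Matrix (Fin nx) (Fin nx) ℝ)
    (Pe : Matrix (Fin N) (Fin N) ℝ) (γ : Fin N → ℝ) (lam : ℝ) :
    Matrix (Fin N × (Fin nx × Fin nx)) (Fin N × (Fin nx × Fin nx)) ℝ :=
  (Peᵀ ⊗ₖ (1 : Matrix (Fin nx × Fin nx) (Fin nx × Fin nx) ℝ)) *
    blkDiag (fun m => (1 - lam * γ m) • (A ⊗ₖ A))

/-- Spectral radius of a real square matrix: the largest absolute value of its
(complex) eigenvalues. -/
noncomputable def specRad {ι : Type} [Fintype ι] [DecidableEq ι]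
    (M : Matrix ι ι ℝ) : ℝ :=
  sSup {r : ℝ | ∃ μ ∈ spectrum ℂ (M.map (Complex.ofReal ·)), r = ‖μ‖}

/-!
Write `𝒳_λ(X, α, φ) = (1 - λφ) A X Aᵀ + α Q + λφ A (X - X Lᵀ (L X Lᵀ + α R)⁻¹ L X) Aᵀ`.
The bracket is a Schur complement of the positive semidefinite block matrix
`[[X, X Lᵀ], [L X, L X Lᵀ + α R]]`, so `𝒳_λ(X, α, φ) ⪰ (1 - λφ) A Y Aᵀ + α Q` whenever `Y ⪯ X`.
By stationarity, `π_n Q = ∑ₘ p_{mn} π_m Q`, so `𝒮_n(S)` is the `p_{·n}`-average of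
`(1 - λγ_m) A S_m Aᵀ + π_m Q`, while `Z_n(k+1)` is the same average of `𝒳_λ(Z_m(k), π_m, γ_m)`;
induction on `k` compares the two termwise.
-/

namespace Matrix

variable {m p : Type*} [Fintype m] [Fintype p]

lemma PosSemidef.mul_mul_transpose_same {M : Matrix m m ℝ} (hM : M.PosSemidef)
    (B : Matrix p m ℝ) : (B * M * Bᵀ).PosSemidef := by
  simpa only [conjTranspose_eq_transpose_of_trivial] using hM.mul_mul_conjTranspose_same B

lemma PosSemidef.sub_mul_mul_inv_mul_mul [DecidableEq p] {X : Matrix m m ℝ}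
    (hX : X.PosSemidef) (L : Matrix p m ℝ) {D : Matrix p p ℝ} (hD : D.PosDef) :
    (X - X * Lᵀ * (L * X * Lᵀ + D)⁻¹ * (L * X)).PosSemidef := by
  classical
  have hXLD : (L * X * Lᵀ + D).PosDef :=
    PosDef.posSemidef_add (hX.mul_mul_transpose_same L) hD
  let := hXLD.isUnit.invertible
  have hLX : (X * Lᵀ)ᴴ = L * X := by
    rw [conjTranspose_eq_transpose_of_trivial, transpose_mul, transpose_transpose,
      ← conjTranspose_eq_transpose_of_trivial, hX.isHermitian.eq]
  have hgram : (fromBlocks X (X * Lᵀ) (L * X) (L * X * Lᵀ)).PosSemidef := by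
    have := hX.mul_mul_transpose_same (fromRows (1 : Matrix m m ℝ) L)
    rw [transpose_fromRows, fromRows_mul, fromRows_mul_fromCols] at this
    simpa [Matrix.mul_assoc] using this
  have hD' : (fromBlocks 0 0 0 D : Matrix (m ⊕ p) (m ⊕ p) ℝ).PosSemidef := by
    have := hD.posSemidef.mul_mul_transpose_same (fromRows (0 : Matrix m p ℝ) (1 : Matrix p p ℝ))
    rw [transpose_fromRows, fromRows_mul, fromRows_mul_fromCols] at this
    simpa using this
  have schur := PosDef.fromBlocks₂₂ X (X * Lᵀ) hXLD
  rw [hLX] at schur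
  exact schur.mp (by simpa [fromBlocks_add] using hgram.add hD')

end Matrix

lemma loewnerLE_sum_smul {n : ℕ} {ι : Type*} (s : Finset ι)
    {f g : ι → Matrix (Fin n) (Fin n) ℝ} {w : ι → ℝ} (hfg : ∀ i ∈ s, loewnerLE (f i) (g i))
    (hw : ∀ i ∈ s, 0 ≤ w i) : loewnerLE (∑ i ∈ s, w i • f i) (∑ i ∈ s, w i • g i) := by
  unfold loewnerLE at *
  rw [← Finset.sum_sub_distrib]
  exact posSemidef_sum s fun i hi => by
    simpa only [← smul_sub] using (hfg i hi).smul (hw i hi)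

section Riccati

variable {nx ny N : ℕ} (A : Matrix (Fin nx) (Fin nx) ℝ) (L : Matrix (Fin ny) (Fin nx) ℝ)
  (Q : Matrix (Fin nx) (Fin nx) ℝ) (R : Matrix (Fin ny) (Fin ny) ℝ) (lam : ℝ)

lemma calX_eq_add_schur (X : Matrix (Fin nx) (Fin nx) ℝ) (al phi : ℝ) :
    calX A L Q R lam X al phi =
      (1 - lam * phi) • (A * X * Aᵀ) + al • Q +
        (lam * phi) • (A * (X - X * Lᵀ * (L * X * Lᵀ + al • R)⁻¹ * (L * X)) * Aᵀ) := by
  unfold calX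
  simp only [Matrix.mul_sub, Matrix.sub_mul, Matrix.mul_assoc]
  module

lemma loewnerLE_calX {X Y : Matrix (Fin nx) (Fin nx) ℝ} (hX : X.PosSemidef)
    (hYX : loewnerLE Y X) (hR : R.PosDef) {al phi : ℝ} (hal : 0 < al)
    (hφ₀ : 0 ≤ lam * phi) (hφ₁ : lam * phi ≤ 1) :
    loewnerLE ((1 - lam * phi) • (A * Y * Aᵀ) + al • Q) (calX A L Q R lam X al phi) := by
  have hschur := hX.sub_mul_mul_inv_mul_mul L (hR.smul hal)
  have hdiff : calX A L Q R lam X al phi - ((1 - lam * phi) • (A * Y * Aᵀ) + al • Q) =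
      (1 - lam * phi) • (A * (X - Y) * Aᵀ) +
        (lam * phi) • (A * (X - X * Lᵀ * (L * X * Lᵀ + al • R)⁻¹ * (L * X)) * Aᵀ) := by
    rw [calX_eq_add_schur, Matrix.mul_sub A X Y, Matrix.sub_mul]
    module
  unfold loewnerLE
  rw [hdiff]
  exact ((hYX.mul_mul_transpose_same A).smul (sub_nonneg.mpr hφ₁)).add
    ((hschur.mul_mul_transpose_same A).smul hφ₀)

lemma calX_posSemidef {X : Matrix (Fin nx) (Fin nx) ℝ} (hX : X.PosSemidef) (hQ : Q.PosSemidef)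
    (hR : R.PosDef) {al phi : ℝ} (hal : 0 < al) (hφ₀ : 0 ≤ lam * phi)
    (hφ₁ : lam * phi ≤ 1) : (calX A L Q R lam X al phi).PosSemidef := by
  have h := loewnerLE_calX A L Q R lam hX (Y := 0) (by simpa [loewnerLE] using hX) hR hal hφ₀ hφ₁
  simp only [Matrix.mul_zero, Matrix.zero_mul, smul_zero, zero_add, loewnerLE] at h
  simpa using h.add (hQ.smul hal.le)

variable {P : Matrix (Fin N) (Fin N) ℝ} {γ : Fin N → ℝ}

lemma traj_posSemidef {α : Fin N → ℕ → ℝ} {Y0 : Fin N → Matrix (Fin nx) (Fin nx) ℝ}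
    (hQ : Q.PosSemidef) (hR : R.PosDef) (hP : ∀ m n, 0 ≤ P m n)
    (hγ₀ : ∀ m, 0 ≤ lam * γ m) (hγ₁ : ∀ m, lam * γ m ≤ 1) (hα : ∀ m k, 0 < α m k)
    (hY0 : ∀ n, (Y0 n).PosSemidef) (k : ℕ) (n : Fin N) :
    (traj A L Q R P γ α lam Y0 k n).PosSemidef := by
  induction k generalizing n with
  | zero => exact hY0 n
  | succ k ih =>
    exact posSemidef_sum _ fun m _ =>
      (calX_posSemidef A L Q R lam (ih m) hQ hR (hα m k) (hγ₀ m) (hγ₁ m)).smul (hP m n)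

lemma Sop_eq_sum_of_stationary {π : Fin N → ℝ} (n : Fin N)
    (hstat : π n = ∑ m, P m n * π m) (V : Fin N → Matrix (Fin nx) (Fin nx) ℝ) :
    Sop A Q P γ lam π V n = ∑ m, P m n • ((1 - lam * γ m) • (A * V m * Aᵀ) + π m • Q) := by
  simp only [Sop, smul_add, smul_smul, Finset.sum_add_distrib, hstat, Finset.sum_smul]

end Riccati

theorem stmt_13_general {nx ny N : ℕ}
    (A : Matrix (Fin nx) (Fin nx) ℝ) (L : Matrix (Fin ny) (Fin nx) ℝ)
    (Q : Matrix (Fin nx) (Fin nx) ℝ) (R : Matrix (Fin ny) (Fin ny) ℝ)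
    (hQ : Q.PosDef) (hR : R.PosDef)
    (Pe : Matrix (Fin N) (Fin N) ℝ)
    (hPnonneg : ∀ m n, 0 ≤ Pe m n)
    (γ : Fin N → ℝ) (hγ : ∀ m, γ m ∈ Set.Icc (0 : ℝ) 1)
    (lam : ℝ) (hlam : lam ∈ Set.Icc (0 : ℝ) 1)
    (π : Fin N → ℝ) (hπ : ∀ n, 0 < π n)
    (hstat : ∀ n, π n = ∑ m, Pe m n * π m)
    (Z0 : Fin N → Matrix (Fin nx) (Fin nx) ℝ) (hZ0 : ∀ n, (Z0 n).PosSemidef) :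
    ∀ (k : ℕ) (n : Fin N),
      loewnerLE (Straj A Q Pe γ lam π k n)
        (traj A L Q R Pe γ (fun m _ => π m) lam Z0 k n) := by
  have hγ₀ m : 0 ≤ lam * γ m := mul_nonneg hlam.1 (hγ m).1
  have hγ₁ m : lam * γ m ≤ 1 := mul_le_one₀ hlam.2 (hγ m).1 (hγ m).2
  have hZ := traj_posSemidef A L Q R lam hQ.posSemidef hR hPnonneg hγ₀ hγ₁
    (fun m _ => hπ m) hZ0
  intro k
  induction k with
  | zero => intro n; simpa [loewnerLE, Straj, traj] using hZ0 n
  | succ k ih =>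
    intro n
    simp only [Straj]
    rw [Sop_eq_sum_of_stationary A Q lam n (hstat n)]
    exact loewnerLE_sum_smul _
      (fun m _ => loewnerLE_calX A L Q R lam (hZ k m) (ih m) hR (hπ m) (hγ₀ m) (hγ₁ m))
      (fun m _ => hPnonneg m n)

theorem stmt_13 {nx ny N : ℕ} (hnx : 0 < nx) (hny : 0 < ny) (hN : 0 < N)
    (A : Matrix (Fin nx) (Fin nx) ℝ) (L : Matrix (Fin ny) (Fin nx) ℝ)
    (Q : Matrix (Fin nx) (Fin nx) ℝ) (R : Matrix (Fin ny) (Fin ny) ℝ)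
    (hQ : Q.PosDef) (hR : R.PosDef)
    (Pe : Matrix (Fin N) (Fin N) ℝ)
    (hPnonneg : ∀ m n, 0 ≤ Pe m n) (hProw : ∀ m, ∑ n, Pe m n = 1)
    (γ : Fin N → ℝ) (hγ : ∀ m, γ m ∈ Set.Icc (0 : ℝ) 1)
    (lam : ℝ) (hlam : lam ∈ Set.Icc (0 : ℝ) 1)
    (π : Fin N → ℝ) (hπ : ∀ n, 0 < π n)
    (hstat : ∀ n, π n = ∑ m, Pe m n * π m)
    (Z0 : Fin N → Matrix (Fin nx) (Fin nx) ℝ) (hZ0 : ∀ n, (Z0 n).PosSemidef) :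
    ∀ (k : ℕ) (n : Fin N),
      loewnerLE (Straj A Q Pe γ lam π k n)
        (traj A L Q R Pe γ (fun m _ => π m) lam Z0 k n) :=
  stmt_13_general A L Q R hQ hR Pe hPnonneg γ hγ lam hlam π hπ hstat Z0 hZ0
end

section
/- Eavesdropper MSE lower bound under the stability condition (Proposition 2, first bullet): assume π^∞_e is stationary for P_e (π^∞_{e,n} = Σ_m p_{e,mn} π^∞_{e,m} for all n) and ρ(𝒜_e) < 1, and let S = (S_1,…,S_N) be the (unique) N-tuple of positive semidefinite symmetric matrices satisfying S_n = 𝒮_{e,n}(S) for all n. Let Z_n(0), n = 1,…,N, be arbitrary positive semidefinite symmetric matrices and define Z_n(k+1) = Σ_{m=1}^N p_{e,mn} 𝒳_λ(Z_m(k), π^∞_{e,m}, γ̂_{e,m}). Then liminf_{k→∞} tr Z_n(k) ≥ tr S_n for every n = 1,…,N. -/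
open Matrix Kronecker Filter

/-!
The Kalman correction in `𝒳_λ` is a Schur complement, hence positive semidefinite, so every
Riccati step dominates the corresponding step of the Lyapunov operator `𝒮_e` (stationarity of `π`
splits `π_n Q` over the sum in `m`). As `𝒮_e` is monotone, the Riccati trajectory `Z(k)` dominates
the Lyapunov iterates `W(k)` started at `0`. The deficits evolve linearly,
`vec (S - W(k)) = 𝒜_eᵏ vec S`, and `ρ(𝒜_e) < 1` forces `𝒜_eᵏ → 0` by Gelfand's formula, so
`tr W_n(k) → tr S_n ≤ liminf tr Z_n(k)`.
-/

open Topology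

theorem Matrix.PosSemidef.sub_mul_inv_mul_posSemidef {m n : Type*} [Fintype m] [Fintype n]
    [DecidableEq m] [DecidableEq n] {X : Matrix n n ℝ} {R : Matrix m m ℝ} (hX : X.PosSemidef)
    (hR : R.PosDef) (L : Matrix m n ℝ) :
    (X - X * Lᵀ * (L * X * Lᵀ + R)⁻¹ * (L * X)).PosSemidef := by
  have hM : (L * X * Lᵀ + R).PosDef :=
    PosDef.posSemidef_add (by simpa using hX.mul_mul_conjTranspose_same L) hR
  let := hM.isUnit.invertible
  have hXT : Xᵀ = X := hX.1
  have hB : (L * X)ᴴ = X * Lᵀ := by simp [hXT]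
  -- the block matrix is `[L; 1] X [L; 1]ᵀ + [1; 0] R [1; 0]ᵀ`
  have hblock : (fromBlocks (L * X * Lᵀ + R) (L * X) (L * X)ᴴ X).PosSemidef := by
    have hXpart := hX.mul_mul_conjTranspose_same (fromRows L (1 : Matrix n n ℝ))
    have hRpart := hR.posSemidef.mul_mul_conjTranspose_same
      (fromRows (1 : Matrix m m ℝ) (0 : Matrix n m ℝ))
    convert hXpart.add hRpart using 1
    rw [hB]
    ext (i | i) (j | j) <;> simp [fromRows_mul, transpose_fromRows]
  simpa [hB, hXT, Matrix.mul_assoc] using (PosDef.fromBlocks₁₁ (L * X) X hM).mp hblock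

section Riccati

variable {nx ny : ℕ} (A : Matrix (Fin nx) (Fin nx) ℝ) (L : Matrix (Fin ny) (Fin nx) ℝ)
  (Q : Matrix (Fin nx) (Fin nx) ℝ) {R : Matrix (Fin ny) (Fin ny) ℝ} {lam phi al : ℝ}
  {X : Matrix (Fin nx) (Fin nx) ℝ}

theorem calX_eq_add :
    calX A L Q R lam X al phi = (1 - lam * phi) • (A * X * Aᵀ) + al • Q +
      (lam * phi) • (A * (X - X * Lᵀ * (L * X * Lᵀ + al • R)⁻¹ * (L * X)) * Aᵀ) := by
  simp only [calX, Matrix.mul_sub, Matrix.sub_mul, Matrix.mul_assoc]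
  module

theorem posSemidef_calX_sub (hX : X.PosSemidef) (hR : R.PosDef) (hal : 0 < al)
    (hφ : 0 ≤ lam * phi) :
    (calX A L Q R lam X al phi - ((1 - lam * phi) • (A * X * Aᵀ) + al • Q)).PosSemidef := by
  rw [calX_eq_add, add_sub_cancel_left]
  refine .smul ?_ hφ
  simpa using (hX.sub_mul_inv_mul_posSemidef (hR.smul hal) L).mul_mul_conjTranspose_same A

theorem posSemidef_calX (hQ : Q.PosSemidef) (hX : X.PosSemidef) (hR : R.PosDef) (hal : 0 < al)
    (hφ : lam * phi ∈ Set.Icc 0 1) : (calX A L Q R lam X al phi).PosSemidef := by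
  have hlower : ((1 - lam * phi) • (A * X * Aᵀ) + al • Q).PosSemidef :=
    .add (.smul (by simpa using hX.mul_mul_conjTranspose_same A) (by linarith [hφ.2]))
      (hQ.smul hal.le)
  simpa using hlower.add (posSemidef_calX_sub A L Q hX hR hal hφ.1)

end Riccati

theorem spectrum.tendsto_pow_nhds_zero_of_spectralRadius_lt_one {A : Type*} [NormedRing A]
    [NormedAlgebra ℂ A] [CompleteSpace A] {a : A} (ha : spectralRadius ℂ a < 1) :
    Tendsto (fun k : ℕ => a ^ k) atTop (𝓝 0) := by
  obtain ⟨r, hr, hr1⟩ := ENNReal.lt_iff_exists_nnreal_btwn.mp ha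
  have hbound : ∀ᶠ k : ℕ in atTop, ‖a ^ k‖ ≤ (r : ℝ) ^ k := by
    filter_upwards [(pow_nnnorm_pow_one_div_tendsto_nhds_spectralRadius a).eventually_lt_const hr,
      eventually_ge_atTop 1] with k hk hk1
    rw [one_div, ENNReal.rpow_inv_lt_iff (by positivity), ENNReal.rpow_natCast] at hk
    exact_mod_cast hk.le
  exact tendsto_zero_iff_norm_tendsto_zero.mpr <|
    squeeze_zero' (.of_forall fun _ => norm_nonneg _) hbound
      (tendsto_pow_atTop_nhds_zero_of_lt_one r.2 (by exact_mod_cast hr1))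

theorem spectralRadius_map_ofReal_le_specRad {ι : Type} [Fintype ι] [DecidableEq ι]
    (M : Matrix ι ι ℝ) :
    spectralRadius ℂ (M.map (Complex.ofReal ·)) ≤ ENNReal.ofReal (specRad M) := by
  have hbdd := ((Matrix.finite_spectrum (M.map (Complex.ofReal ·))).image (‖·‖)).bddAbove
  refine iSup₂_le fun μ hμ => ?_
  rw [← enorm_eq_nnnorm, ← ofReal_norm]
  exact ENNReal.ofReal_le_ofReal
    (le_csSup (by simpa [Set.image, eq_comm] using hbdd) ⟨μ, hμ, rfl⟩)

open scoped Matrix.Norms.L2Operator in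
theorem Matrix.tendsto_pow_nhds_zero_of_specRad_lt_one {ι : Type} [Fintype ι] [DecidableEq ι]
    {M : Matrix ι ι ℝ} (hM : specRad M < 1) : Tendsto (fun k : ℕ => M ^ k) atTop (𝓝 0) := by
  have hMc := spectrum.tendsto_pow_nhds_zero_of_spectralRadius_lt_one <|
    (spectralRadius_map_ofReal_le_specRad M).trans_lt (by rwa [ENNReal.ofReal_lt_one])
  have hre := ((continuous_id.matrix_map Complex.continuous_re).tendsto 0).comp hMc
  convert hre using 2 with k
  · have hpow : (M.map (Complex.ofReal ·)) ^ k = (M ^ k).map (Complex.ofReal ·) :=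
      (map_pow Complex.ofRealHom.mapMatrix M k).symm
    ext
    simp [hpow]
  · simp

section Coupled

variable {nx N : ℕ} (A Q : Matrix (Fin nx) (Fin nx) ℝ) (Pe : Matrix (Fin N) (Fin N) ℝ)
  (γ : Fin N → ℝ) (lam : ℝ) (π : Fin N → ℝ)

theorem Sop_sub_Sop (V U : Fin N → Matrix (Fin nx) (Fin nx) ℝ) (n : Fin N) :
    Sop A Q Pe γ lam π V n - Sop A Q Pe γ lam π U n =
      ∑ m, (Pe m n * (1 - lam * γ m)) • (A * (V m - U m) * Aᵀ) := by
  simp only [Sop, add_sub_add_right_eq_sub, ← Finset.sum_sub_distrib, ← smul_sub,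
    Matrix.mul_sub, Matrix.sub_mul]

theorem posSemidef_Sop_sub_Sop (hP : ∀ m n, 0 ≤ Pe m n) (hφ : ∀ m, lam * γ m ≤ 1)
    {V U : Fin N → Matrix (Fin nx) (Fin nx) ℝ} (hVU : ∀ m, (V m - U m).PosSemidef) (n : Fin N) :
    (Sop A Q Pe γ lam π V n - Sop A Q Pe γ lam π U n).PosSemidef := by
  rw [Sop_sub_Sop]
  exact posSemidef_sum _ fun m _ => .smul (by simpa using (hVU m).mul_mul_conjTranspose_same A)
    (mul_nonneg (hP m n) (by linarith [hφ m]))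

theorem posSemidef_sum_calX_sub_Sop {ny : ℕ} (L : Matrix (Fin ny) (Fin nx) ℝ)
    {R : Matrix (Fin ny) (Fin ny) ℝ} (hR : R.PosDef) (hP : ∀ m n, 0 ≤ Pe m n)
    (hφ : ∀ m, 0 ≤ lam * γ m) (hπ : ∀ m, 0 < π m) {n : Fin N} (hstat : π n = ∑ m, Pe m n * π m)
    {X : Fin N → Matrix (Fin nx) (Fin nx) ℝ} (hX : ∀ m, (X m).PosSemidef) :
    (∑ m, Pe m n • calX A L Q R lam (X m) (π m) (γ m) - Sop A Q Pe γ lam π X n).PosSemidef := by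
  have hSop : Sop A Q Pe γ lam π X n =
      ∑ m, Pe m n • ((1 - lam * γ m) • (A * X m * Aᵀ) + π m • Q) := by
    rw [Sop, hstat, Finset.sum_smul, ← Finset.sum_add_distrib]
    congr! 1 with m
    module
  rw [hSop, ← Finset.sum_sub_distrib]
  refine posSemidef_sum _ fun m _ => ?_
  rw [← smul_sub]
  exact (posSemidef_calX_sub A L Q (hX m) hR (hπ m) (hφ m)).smul (hP m n)

theorem posSemidef_traj {ny : ℕ} (L : Matrix (Fin ny) (Fin nx) ℝ)
    {R : Matrix (Fin ny) (Fin ny) ℝ} (hQ : Q.PosSemidef) (hR : R.PosDef)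
    (hP : ∀ m n, 0 ≤ Pe m n) (hφ : ∀ m, lam * γ m ∈ Set.Icc 0 1) {α : Fin N → ℕ → ℝ}
    (hα : ∀ m k, 0 < α m k) {Y0 : Fin N → Matrix (Fin nx) (Fin nx) ℝ}
    (hY0 : ∀ n, (Y0 n).PosSemidef) (k : ℕ) (n : Fin N) :
    (traj A L Q R Pe γ α lam Y0 k n).PosSemidef := by
  induction k generalizing n with
  | zero => exact hY0 n
  | succ k ih =>
    exact posSemidef_sum _ fun m _ =>
      (posSemidef_calX A L Q hQ (ih m) hR (hα m k) (hφ m)).smul (hP m n)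

theorem posSemidef_traj_sub_Straj {ny : ℕ} (L : Matrix (Fin ny) (Fin nx) ℝ)
    {R : Matrix (Fin ny) (Fin ny) ℝ} (hQ : Q.PosSemidef) (hR : R.PosDef)
    (hP : ∀ m n, 0 ≤ Pe m n) (hφ : ∀ m, lam * γ m ∈ Set.Icc 0 1) (hπ : ∀ m, 0 < π m)
    (hstat : ∀ n, π n = ∑ m, Pe m n * π m) {Z0 : Fin N → Matrix (Fin nx) (Fin nx) ℝ}
    (hZ0 : ∀ n, (Z0 n).PosSemidef) (k : ℕ) (n : Fin N) :
    (traj A L Q R Pe γ (fun m _ => π m) lam Z0 k n - Straj A Q Pe γ lam π k n).PosSemidef := by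
  induction k generalizing n with
  | zero => simpa [traj, Straj] using hZ0 n
  | succ k ih =>
    have hstep := posSemidef_sum_calX_sub_Sop A Q Pe γ lam π L hR hP (fun m => (hφ m).1) hπ
      (hstat n) fun m => posSemidef_traj A Q Pe γ lam L hQ hR hP hφ (fun m _ => hπ m) hZ0 k m
    have hmono := posSemidef_Sop_sub_Sop A Q Pe γ lam π hP (fun m => (hφ m).2) ih n
    simpa [traj, Straj] using hstep.add hmono

def vecTuple {ι : Type*} (V : Fin N → Matrix ι ι ℝ) : Fin N × ι × ι → ℝ :=
  fun q => V q.1 q.2.1 q.2.2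

theorem calAe_apply (n m : Fin N) (p q : Fin nx × Fin nx) :
    calAe A Pe γ lam (n, p) (m, q) = Pe m n * ((1 - lam * γ m) * (A p.1 q.1 * A p.2 q.2)) := by
  rw [calAe, Matrix.mul_apply, Fintype.sum_prod_type, Finset.sum_eq_single m]
  · simp [blkDiag, Matrix.one_apply]
  · intro b _ hb
    simp [blkDiag, hb]
  · simp

theorem calAe_mulVec_vecTuple (V : Fin N → Matrix (Fin nx) (Fin nx) ℝ) :
    calAe A Pe γ lam *ᵥ vecTuple V =
      vecTuple fun n => ∑ m, (Pe m n * (1 - lam * γ m)) • (A * V m * Aᵀ) := by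
  ext ⟨n, i, j⟩
  simp only [mulVec, dotProduct, vecTuple, Fintype.sum_prod_type, calAe_apply, Matrix.sum_apply,
    Matrix.smul_apply, smul_eq_mul, Matrix.mul_apply, Matrix.transpose_apply, Finset.mul_sum,
    Finset.sum_mul]
  refine Finset.sum_congr rfl fun m _ => ?_
  rw [Finset.sum_comm]
  exact Finset.sum_congr rfl fun _ _ => Finset.sum_congr rfl fun _ _ => by ring

theorem vecTuple_sub_Straj {S : Fin N → Matrix (Fin nx) (Fin nx) ℝ}
    (hS : ∀ n, S n = Sop A Q Pe γ lam π S n) (k : ℕ) :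
    vecTuple (S - Straj A Q Pe γ lam π k) = calAe A Pe γ lam ^ k *ᵥ vecTuple S := by
  induction k with
  | zero => ext; simp [Straj, vecTuple]
  | succ k ih =>
    have hrec : S - Straj A Q Pe γ lam π (k + 1) = fun n =>
        ∑ m, (Pe m n * (1 - lam * γ m)) • (A * (S - Straj A Q Pe γ lam π k) m * Aᵀ) := by
      ext1 n
      conv_lhs => rw [Pi.sub_apply, hS n]
      exact Sop_sub_Sop A Q Pe γ lam π _ _ n
    rw [hrec, ← calAe_mulVec_vecTuple, ih, mulVec_mulVec, pow_succ']

theorem tendsto_Straj (hρ : specRad (calAe A Pe γ lam) < 1)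
    {S : Fin N → Matrix (Fin nx) (Fin nx) ℝ} (hS : ∀ n, S n = Sop A Q Pe γ lam π S n) :
    Tendsto (Straj A Q Pe γ lam π) atTop (𝓝 S) := by
  have hvec : Tendsto (fun k => vecTuple (S - Straj A Q Pe γ lam π k)) atTop (𝓝 0) := by
    simp_rw [vecTuple_sub_Straj A Q Pe γ lam π hS]
    simpa [Function.comp_def] using
      ((continuous_id.matrix_mulVec continuous_const).tendsto 0).comp
        (Matrix.tendsto_pow_nhds_zero_of_specRad_lt_one hρ)
  refine tendsto_pi_nhds.2 fun n => tendsto_pi_nhds.2 fun i => tendsto_pi_nhds.2 fun j => ?_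
  simpa [vecTuple] using (tendsto_const_nhds (x := S n i j)).sub
    ((continuous_apply (n, i, j)).tendsto 0 |>.comp hvec)

end Coupled

theorem stmt_14_general {nx ny N : ℕ}
    (A : Matrix (Fin nx) (Fin nx) ℝ) (L : Matrix (Fin ny) (Fin nx) ℝ)
    (Q : Matrix (Fin nx) (Fin nx) ℝ) (R : Matrix (Fin ny) (Fin ny) ℝ)
    (hQ : Q.PosDef) (hR : R.PosDef)
    (Pe : Matrix (Fin N) (Fin N) ℝ)
    (hPnonneg : ∀ m n, 0 ≤ Pe m n)
    (γ : Fin N → ℝ) (hγ : ∀ m, γ m ∈ Set.Icc (0 : ℝ) 1)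
    (lam : ℝ) (hlam : lam ∈ Set.Icc (0 : ℝ) 1)
    (π : Fin N → ℝ) (hπ : ∀ n, 0 < π n)
    (hstat : ∀ n, π n = ∑ m, Pe m n * π m)
    (hρ : specRad (calAe A Pe γ lam) < 1)
    (S : Fin N → Matrix (Fin nx) (Fin nx) ℝ)
    (hSfix : ∀ n, S n = Sop A Q Pe γ lam π S n)
    (Z0 : Fin N → Matrix (Fin nx) (Fin nx) ℝ) (hZ0 : ∀ n, (Z0 n).PosSemidef) :
    ∀ n : Fin N,
      ((S n).trace : EReal) ≤
        Filter.atTop.liminf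
          (fun k => ((traj A L Q R Pe γ (fun m _ => π m) lam Z0 k n).trace : EReal)) := by
  intro n
  have hφ : ∀ m, lam * γ m ∈ Set.Icc 0 1 := fun m => unitInterval.mul_mem hlam (hγ m)
  have htrace : Continuous fun V : Fin N → Matrix (Fin nx) (Fin nx) ℝ => ((V n).trace : EReal) :=
    continuous_coe_real_ereal.comp (continuous_apply n).matrix_trace
  have hlim : Tendsto (fun k => ((Straj A Q Pe γ lam π k n).trace : EReal)) atTop
      (𝓝 ((S n).trace : EReal)) :=
    (htrace.tendsto S).comp (tendsto_Straj A Q Pe γ lam π hρ hSfix)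
  rw [← hlim.liminf_eq]
  refine liminf_le_liminf (.of_forall fun k => EReal.coe_le_coe_iff.mpr ?_)
  have hdom := posSemidef_traj_sub_Straj A Q Pe γ lam π L hQ.posSemidef hR hPnonneg hφ hπ hstat
    hZ0 k n
  simpa [trace_sub, sub_nonneg] using hdom.trace_nonneg

theorem stmt_14 {nx ny N : ℕ} (hnx : 0 < nx) (hny : 0 < ny) (hN : 0 < N)
    (A : Matrix (Fin nx) (Fin nx) ℝ) (L : Matrix (Fin ny) (Fin nx) ℝ)
    (Q : Matrix (Fin nx) (Fin nx) ℝ) (R : Matrix (Fin ny) (Fin ny) ℝ)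
    (hQ : Q.PosDef) (hR : R.PosDef)
    (Pe : Matrix (Fin N) (Fin N) ℝ)
    (hPnonneg : ∀ m n, 0 ≤ Pe m n) (hProw : ∀ m, ∑ n, Pe m n = 1)
    (γ : Fin N → ℝ) (hγ : ∀ m, γ m ∈ Set.Icc (0 : ℝ) 1)
    (lam : ℝ) (hlam : lam ∈ Set.Icc (0 : ℝ) 1)
    (π : Fin N → ℝ) (hπ : ∀ n, 0 < π n)
    (hstat : ∀ n, π n = ∑ m, Pe m n * π m)
    (hρ : specRad (calAe A Pe γ lam) < 1)
    (S : Fin N → Matrix (Fin nx) (Fin nx) ℝ)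
    (hSpsd : ∀ n, (S n).PosSemidef)
    (hSfix : ∀ n, S n = Sop A Q Pe γ lam π S n)
    (Z0 : Fin N → Matrix (Fin nx) (Fin nx) ℝ) (hZ0 : ∀ n, (Z0 n).PosSemidef) :
    ∀ n : Fin N,
      ((S n).trace : EReal) ≤
        Filter.atTop.liminf
          (fun k => ((traj A L Q R Pe γ (fun m _ => π m) lam Z0 k n).trace : EReal)) :=
  stmt_14_general A L Q R hQ hR Pe hPnonneg γ hγ lam hlam π hπ hstat hρ S hSfix Z0 hZ0
end
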